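/- Let t ≥ 2, λ ≥ 1, and let ℬ be a non-empty t-(v,k,λ) design on X = {1,…,v}. Let C_1,…,C_ℓ ⊆ X, let s_1,…,s_ℓ ≥ 1, and let integers i_{h,j} (1 ≤ h ≤ ℓ, 1 ≤ j ≤ s_h) be given such that for every block B ∈ ℬ there exist h and j with |B ∩ C_h| = i_{h,j}. Suppose there exists a k-element subset S ⊆ X with S ∉ ℬ such that |S ∩ C_h| ∉ {i_{h,1},…,i_{h,s_h}} for every h = 1,…,ℓ. Then γ1(ℬ) ≤ s_1 + ⋯ + s_ℓ, and consequently s_1 + ⋯ + s_ℓ > t/2. -/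

import Mathlib

noncomputable section

variable {σ : Type*}

/-- Characteristic 0-1 vector `c_B` of a finite set `B` of points. -/
def charVec [DecidableEq σ] (B : Finset σ) : σ → ℂ := fun i => if i ∈ B then 1 else 0

/-- `I(ℬ)`: the ideal of all polynomials vanishing at the characteristic vector of
every block of `ℬ`. -/
def designIdeal [DecidableEq σ] (ℬ : Finset (Finset σ)) : Ideal (MvPolynomial σ ℂ) :=
  ⨅ B ∈ ℬ, RingHom.ker (MvPolynomial.eval (charVec B))

/-- The generating set `G₀ = {x₁ + ⋯ + x_v - k} ∪ {xᵢ² - xᵢ}`. -/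
def G0 (σ : Type*) [Fintype σ] (k : ℕ) : Set (MvPolynomial σ ℂ) :=
  insert ((∑ i, MvPolynomial.X i) - MvPolynomial.C (k : ℂ))
    (Set.range fun i : σ => MvPolynomial.X i ^ 2 - MvPolynomial.X i)

/-- The trivial ideal `T = ⟨G₀⟩`. -/
def trivialIdeal (σ : Type*) [Fintype σ] (k : ℕ) : Ideal (MvPolynomial σ ℂ) :=
  Ideal.span (G0 σ k)

/-- `γ₁`: minimum total degree of a non-trivial polynomial in the ideal of the design. -/
def gamma1 [Fintype σ] [DecidableEq σ] (k : ℕ) (ℬ : Finset (Finset σ)) : ℕ :=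
  sInf {d : ℕ | ∃ f ∈ designIdeal ℬ, f ∉ trivialIdeal σ k ∧ f.totalDegree = d}

/-- `γ₂`: least `s` such that `I(ℬ)` is generated by polynomials of total degree `≤ s`. -/
def gamma2 [Fintype σ] [DecidableEq σ] (ℬ : Finset (Finset σ)) : ℕ :=
  sInf {s : ℕ | ∃ G : Set (MvPolynomial σ ℂ),
    (∀ g ∈ G, g.totalDegree ≤ s) ∧ Ideal.span G = designIdeal ℬ}

/-- `ℬ` is a `t`-`(v,k,lam)` design: all blocks have size `k` and every `t`-element
subset of the point set lies in exactly `lam` blocks. -/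
def IsDesign [DecidableEq σ] (ℬ : Finset (Finset σ)) (k t lam : ℕ) : Prop :=
  (∀ B ∈ ℬ, B.card = k) ∧
  ∀ T : Finset σ, T.card = t → (ℬ.filter fun B => T ⊆ B).card = lam



section Helpers

open Finset

lemma card_supersets {v : ℕ} (A J : Finset (Fin v)) (hJA : J ⊆ A) (m : ℕ) (hjm : J.card ≤ m) :
    ((A.powersetCard m).filter (fun T => J ⊆ T)).card
      = (A.card - J.card).choose (m - J.card) := by
  classical
  rw [← Finset.card_sdiff_of_subset hJA, ← Finset.card_powersetCard]
  refine Finset.card_nbij' (fun T => T \ J) (fun U => U ∪ J) ?_ ?_ ?_ ?_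
  · intro T hT
    simp only [Finset.coe_filter, Finset.mem_coe, Set.mem_setOf_eq, Finset.mem_filter, Finset.mem_powersetCard] at hT ⊢
    exact ⟨Finset.sdiff_subset_sdiff hT.1.1 Finset.Subset.rfl,
      by rw [Finset.card_sdiff_of_subset hT.2, hT.1.2]⟩
  · intro U hU
    simp only [Finset.coe_filter, Finset.mem_coe, Set.mem_setOf_eq, Finset.mem_filter, Finset.mem_powersetCard] at hU ⊢
    have hdisj : Disjoint U J := Finset.disjoint_of_subset_left hU.1 Finset.sdiff_disjoint
    refine ⟨⟨Finset.union_subset (hU.1.trans (Finset.sdiff_subset)) hJA, ?_⟩,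
      Finset.subset_union_right⟩
    rw [Finset.card_union_of_disjoint hdisj, hU.2]
    omega
  · intro T hT
    simp only [Finset.coe_filter, Finset.mem_coe, Set.mem_setOf_eq, Finset.mem_filter, Finset.mem_powersetCard] at hT
    exact Finset.sdiff_union_of_subset hT.2
  · intro U hU
    simp only [Finset.mem_coe, Finset.mem_powersetCard] at hU
    have hdisj : Disjoint U J := Finset.disjoint_of_subset_left hU.1 Finset.sdiff_disjoint
    simp only []
    rw [Finset.union_sdiff_right, Finset.sdiff_eq_self_of_disjoint hdisj]

lemma design_double_count {v k t lam : ℕ} (htk : t ≤ k) (hkv : k ≤ v)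
    {ℬ : Finset (Finset (Fin v))} (hdes : IsDesign ℬ k t lam)
    (J : Finset (Fin v)) (hJt : J.card ≤ t) :
    (ℬ.filter fun B => J ⊆ B).card * ((k - J.card).choose (t - J.card))
      = lam * ((v - J.card).choose (t - J.card)) := by
  classical
  have key : ∑ T ∈ ((Finset.univ.powersetCard t).filter fun T => J ⊆ T),
      (ℬ.filter fun B => T ⊆ B).card
      = lam * ((v - J.card).choose (t - J.card)) := by
    rw [Finset.sum_congr rfl (fun T hT => by
      simp only [Finset.mem_filter, Finset.mem_powersetCard] at hT
      exact hdes.2 T hT.1.2), Finset.sum_const, smul_eq_mul,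
      card_supersets _ _ (Finset.subset_univ J) t hJt]
    rw [Finset.card_univ, Fintype.card_fin]
    ring
  rw [← key]
  -- swap the double counting
  have swap : ∀ T, (ℬ.filter fun B => T ⊆ B).card = ∑ B ∈ ℬ, if T ⊆ B then 1 else 0 := by
    intro T
    rw [Finset.sum_boole]
    simp
  calc (ℬ.filter fun B => J ⊆ B).card * ((k - J.card).choose (t - J.card))
      = ∑ B ∈ ℬ, (if J ⊆ B then ((k - J.card).choose (t - J.card)) else 0) := by
        rw [← Finset.sum_filter, Finset.sum_const, smul_eq_mul]
    _ = ∑ B ∈ ℬ, ((Finset.univ.powersetCard t).filter fun T => J ⊆ T ∧ T ⊆ B).card := by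
        refine Finset.sum_congr rfl fun B hB => ?_
        by_cases hJB : J ⊆ B
        · rw [if_pos hJB]
          have : ((Finset.univ.powersetCard t).filter fun T => J ⊆ T ∧ T ⊆ B)
              = (B.powersetCard t).filter fun T => J ⊆ T := by
            ext T
            simp only [Finset.mem_filter, Finset.mem_powersetCard, Finset.subset_univ,
              true_and]
            tauto
          rw [this, card_supersets B J hJB t hJt, hdes.1 B hB]
        · rw [if_neg hJB]
          rw [eq_comm, Finset.card_eq_zero, Finset.filter_eq_empty_iff]
          intro T hT
          rintro ⟨h1, h2⟩
          exact hJB (h1.trans h2)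
    _ = ∑ B ∈ ℬ, ∑ T ∈ ((Finset.univ.powersetCard t).filter fun T => J ⊆ T),
          if T ⊆ B then 1 else 0 := by
        refine Finset.sum_congr rfl fun B _ => ?_
        rw [Finset.sum_boole, Finset.filter_filter]
        simp
    _ = ∑ T ∈ ((Finset.univ.powersetCard t).filter fun T => J ⊆ T),
          (ℬ.filter fun B => T ⊆ B).card := by
        rw [Finset.sum_comm]
        exact Finset.sum_congr rfl fun T _ => (swap T).symm

lemma design_count {v k t lam : ℕ} (htk : t ≤ k) (hkv : k ≤ v)
    {ℬ : Finset (Finset (Fin v))} (hdes : IsDesign ℬ k t lam)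
    (J : Finset (Fin v)) (hJt : J.card ≤ t) :
    (ℬ.filter fun B => J ⊆ B).card * (v.choose k)
      = ℬ.card * ((v - J.card).choose (k - J.card)) := by
  classical
  set j := J.card with hj
  set N := (ℬ.filter fun B => J ⊆ B).card with hN
  have h1 : N * ((k - j).choose (t - j)) = lam * ((v - j).choose (t - j)) :=
    design_double_count htk hkv hdes J hJt
  have h2 : ℬ.card * (k.choose t) = lam * (v.choose t) := by
    have := design_double_count htk hkv hdes ∅ (by simp)
    simpa using this
  have I1 : v.choose k * k.choose t = v.choose t * (v - t).choose (k - t) :=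
    Nat.choose_mul htk
  have I2 : (v - j).choose (k - j) * (k - j).choose (t - j)
      = (v - j).choose (t - j) * (v - t).choose (k - t) := by
    have h := Nat.choose_mul (n := v - j) (k := k - j) (s := t - j)
      (by omega)
    have e1 : v - j - (t - j) = v - t := Nat.sub_sub_sub_cancel_right hJt
    have e2 : k - j - (t - j) = k - t := Nat.sub_sub_sub_cancel_right hJt
    rwa [e1, e2] at h
  have hpos : 0 < k.choose t * (k - j).choose (t - j) :=
    Nat.mul_pos (Nat.choose_pos htk) (Nat.choose_pos (by omega))
  refine Nat.eq_of_mul_eq_mul_right hpos ?_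
  calc N * v.choose k * (k.choose t * (k - j).choose (t - j))
      = (N * (k - j).choose (t - j)) * (v.choose k * k.choose t) := by ring
    _ = (lam * (v - j).choose (t - j)) * (v.choose t * (v - t).choose (k - t)) := by
        rw [h1, I1]
    _ = (ℬ.card * k.choose t) * ((v - j).choose (t - j) * (v - t).choose (k - t)) := by
        rw [h2]; ring
    _ = (ℬ.card * k.choose t) * ((v - j).choose (k - j) * (k - j).choose (t - j)) := by
        rw [I2]
    _ = ℬ.card * (v - j).choose (k - j) * (k.choose t * (k - j).choose (t - j)) := by ring

end Helpers

section Main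

open Finset MvPolynomial

variable {v : ℕ}

/-- Evaluation of `f` at a 0-1 point as a sum of indicators over the support. -/
lemma eval_charVec_eq_sum (f : MvPolynomial (Fin v) ℂ) (B : Finset (Fin v)) :
    MvPolynomial.eval (charVec B) f
      = ∑ α ∈ f.support, MvPolynomial.coeff α f * (if α.support ⊆ B then 1 else 0) := by
  classical
  rw [MvPolynomial.eval_eq]
  refine Finset.sum_congr rfl fun α hα => ?_
  congr 1
  by_cases hsub : α.support ⊆ B
  · rw [if_pos hsub]
    refine Finset.prod_eq_one fun i hi => ?_
    unfold charVec
    rw [if_pos (hsub hi), one_pow]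
  · rw [if_neg hsub]
    obtain ⟨i, hi, hiB⟩ := Finset.not_subset.mp hsub
    refine Finset.prod_eq_zero hi ?_
    unfold charVec
    rw [if_neg hiB]
    exact zero_pow (Finsupp.mem_support_iff.mp hi)

/-- The Gram-type expansion of `∑ |f(c_B)|²` over a family of sets. -/
lemma sum_mul_conj_eq (f : MvPolynomial (Fin v) ℂ) (𝒜 : Finset (Finset (Fin v))) :
    ∑ B ∈ 𝒜, (MvPolynomial.eval (charVec B) f)
        * (starRingEnd ℂ) (MvPolynomial.eval (charVec B) f)
      = ∑ α ∈ f.support, ∑ β ∈ f.support,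
          (MvPolynomial.coeff α f * (starRingEnd ℂ) (MvPolynomial.coeff β f))
            * ((𝒜.filter fun B => α.support ∪ β.support ⊆ B).card : ℂ) := by
  classical
  have step : ∀ B : Finset (Fin v),
      (MvPolynomial.eval (charVec B) f) * (starRingEnd ℂ) (MvPolynomial.eval (charVec B) f)
        = ∑ α ∈ f.support, ∑ β ∈ f.support,
            (MvPolynomial.coeff α f * (starRingEnd ℂ) (MvPolynomial.coeff β f))
              * (if α.support ∪ β.support ⊆ B then 1 else 0) := by
    intro B
    rw [eval_charVec_eq_sum f B, map_sum, Finset.sum_mul_sum]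
    refine Finset.sum_congr rfl fun α _ => Finset.sum_congr rfl fun β _ => ?_
    rw [map_mul]
    have hχ : (starRingEnd ℂ) (if β.support ⊆ B then (1 : ℂ) else 0)
        = (if β.support ⊆ B then (1 : ℂ) else 0) := by
      split_ifs <;> simp
    rw [hχ]
    have hprod : (if α.support ⊆ B then (1 : ℂ) else 0) * (if β.support ⊆ B then (1 : ℂ) else 0)
        = (if α.support ∪ β.support ⊆ B then (1 : ℂ) else 0) := by
      by_cases h1 : α.support ⊆ B <;> by_cases h2 : β.support ⊆ B <;>
        simp [h1, h2, Finset.union_subset_iff]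
    calc MvPolynomial.coeff α f * (if α.support ⊆ B then (1 : ℂ) else 0)
          * ((starRingEnd ℂ) (MvPolynomial.coeff β f) * (if β.support ⊆ B then (1 : ℂ) else 0))
        = (MvPolynomial.coeff α f * (starRingEnd ℂ) (MvPolynomial.coeff β f))
          * ((if α.support ⊆ B then (1 : ℂ) else 0) * (if β.support ⊆ B then (1 : ℂ) else 0)) := by
          ring
      _ = _ := by rw [hprod]
  rw [Finset.sum_congr rfl fun B _ => step B]
  rw [Finset.sum_comm]
  refine Finset.sum_congr rfl fun α _ => ?_
  rw [Finset.sum_comm]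
  refine Finset.sum_congr rfl fun β _ => ?_
  rw [← Finset.mul_sum, Finset.sum_boole]

end Main

open Finset MvPolynomial in
/-- the zonal-polynomial bound derived from Theorem `t/2`. -/
theorem zonal_intersection_bound (v k t lam : ℕ) (ht : 2 ≤ t) (hlam : 1 ≤ lam)
    (htk : t ≤ k) (hkv : k ≤ v)
    (ℬ : Finset (Finset (Fin v))) (hdes : IsDesign ℬ k t lam) (hne : ℬ.Nonempty)
    (ℓ : ℕ) (Cs : Fin ℓ → Finset (Fin v)) (s : Fin ℓ → ℕ) (hs : ∀ h, 1 ≤ s h)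
    (I : (h : Fin ℓ) → Fin (s h) → ℕ)
    (hcover : ∀ B ∈ ℬ, ∃ h j, (B ∩ Cs h).card = I h j)
    (S : Finset (Fin v)) (hS : S.card = k) (hSnotB : S ∉ ℬ)
    (hmiss : ∀ h j, (S ∩ Cs h).card ≠ I h j) :
    gamma1 k ℬ ≤ ∑ h, s h ∧ (t : ℝ) / 2 < ((∑ h, s h : ℕ) : ℝ) := by
  classical
  set f : MvPolynomial (Fin v) ℂ :=
    ∏ h : Fin ℓ, ∏ j : Fin (s h),
      ((∑ i ∈ Cs h, MvPolynomial.X i) - MvPolynomial.C (I h j : ℂ)) with hf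
  -- evaluation of f at a characteristic vector
  have heval : ∀ B : Finset (Fin v), MvPolynomial.eval (charVec B) f
      = ∏ h : Fin ℓ, ∏ j : Fin (s h), (((B ∩ Cs h).card : ℂ) - (I h j : ℂ)) := by
    intro B
    rw [hf]
    simp only [map_prod, map_sub, map_sum, MvPolynomial.eval_X, MvPolynomial.eval_C]
    refine Finset.prod_congr rfl fun h _ => Finset.prod_congr rfl fun j _ => ?_
    congr 1
    unfold charVec
    rw [Finset.sum_boole, Finset.filter_mem_eq_inter, Finset.inter_comm]
  -- f vanishes at all blocks
  have hvanish : ∀ B ∈ ℬ, MvPolynomial.eval (charVec B) f = 0 := by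
    intro B hB
    obtain ⟨h, j, hij⟩ := hcover B hB
    rw [heval B]
    refine Finset.prod_eq_zero (Finset.mem_univ h) ?_
    refine Finset.prod_eq_zero (Finset.mem_univ j) ?_
    rw [hij, sub_self]
  have hfI : f ∈ designIdeal ℬ := by
    simp only [designIdeal, Ideal.mem_iInf, RingHom.mem_ker]
    exact hvanish
  -- f does not vanish at S
  have hevalS : MvPolynomial.eval (charVec S) f ≠ 0 := by
    rw [heval S]
    refine Finset.prod_ne_zero_iff.mpr fun h _ => Finset.prod_ne_zero_iff.mpr fun j _ => ?_
    exact sub_ne_zero_of_ne (by exact_mod_cast hmiss h j)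
  -- every trivial polynomial vanishes at S
  have hfT : f ∉ trivialIdeal (Fin v) k := by
    intro hmem
    apply hevalS
    have hT : trivialIdeal (Fin v) k ≤ RingHom.ker (MvPolynomial.eval (charVec S)) := by
      rw [trivialIdeal, Ideal.span_le]
      intro g hg
      rcases hg with rfl | ⟨i, rfl⟩
      · simp only [SetLike.mem_coe, RingHom.mem_ker, map_sub, map_sum, MvPolynomial.eval_X,
          MvPolynomial.eval_C]
        unfold charVec
        rw [Finset.sum_boole, Finset.filter_mem_eq_inter, Finset.univ_inter, hS, sub_self]
      · simp only [SetLike.mem_coe, RingHom.mem_ker, map_sub, map_pow, MvPolynomial.eval_X]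
        unfold charVec
        split_ifs <;> ring
    exact hT hmem
  -- degree bound
  have hdeg : f.totalDegree ≤ ∑ h, s h := by
    rw [hf]
    refine le_trans (MvPolynomial.totalDegree_finset_prod _ _) ?_
    refine le_trans (Finset.sum_le_sum fun h _ =>
      MvPolynomial.totalDegree_finset_prod _ _) ?_
    have hbound : ∀ (h : Fin ℓ) (j : Fin (s h)),
        ((∑ i ∈ Cs h, MvPolynomial.X i) - MvPolynomial.C ((I h j : ℂ))).totalDegree ≤ 1 := by
      intro h j
      refine le_trans (MvPolynomial.totalDegree_sub _ _) ?_
      refine sup_le ?_ ?_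
      · refine le_trans (MvPolynomial.totalDegree_finset_sum _ _) ?_
        exact Finset.sup_le fun i _ => le_of_eq (MvPolynomial.totalDegree_X i)
      · rw [MvPolynomial.totalDegree_C]
        exact Nat.zero_le 1
    have hinner : ∀ h : Fin ℓ, ∑ j : Fin (s h),
        ((∑ i ∈ Cs h, MvPolynomial.X i) - MvPolynomial.C ((I h j : ℂ))).totalDegree ≤ s h := by
      intro h
      refine le_trans ?_ (le_of_eq (by simp : (∑ _j : Fin (s h), 1) = s h))
      exact Finset.sum_le_sum fun j _ => hbound h j
    exact Finset.sum_le_sum fun h _ => hinner h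
  constructor
  · refine le_trans (Nat.sInf_le ?_) hdeg
    exact ⟨f, hfI, hfT, rfl⟩
  -- second part: t/2 < ∑ s
  by_contra hlt
  push_neg at hlt
  have h2d : 2 * (∑ h, s h) ≤ t := by
    have : ((2 * ∑ h, s h : ℕ) : ℝ) ≤ (t : ℝ) := by push_cast at hlt ⊢; linarith
    exact_mod_cast this
  -- support size bound for monomials of f
  have hsupp : ∀ α ∈ f.support, α.support.card ≤ ∑ h, s h := by
    intro α hα
    have h1 : α.support.card ≤ α.sum fun _ e => e := by
      rw [Finsupp.sum, Finset.card_eq_sum_ones]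
      exact Finset.sum_le_sum fun i hi =>
        Nat.one_le_iff_ne_zero.mpr (Finsupp.mem_support_iff.mp hi)
    exact le_trans h1 (le_trans (MvPolynomial.le_totalDegree hα) hdeg)
  set 𝒦 : Finset (Finset (Fin v)) := Finset.univ.powersetCard k with h𝒦
  -- the key Gram identity
  have hkey : (v.choose k : ℂ) * ∑ B ∈ ℬ, (MvPolynomial.eval (charVec B) f)
        * (starRingEnd ℂ) (MvPolynomial.eval (charVec B) f)
      = (ℬ.card : ℂ) * ∑ K ∈ 𝒦, (MvPolynomial.eval (charVec K) f)
        * (starRingEnd ℂ) (MvPolynomial.eval (charVec K) f) := by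
    rw [sum_mul_conj_eq f ℬ, sum_mul_conj_eq f 𝒦, Finset.mul_sum, Finset.mul_sum]
    refine Finset.sum_congr rfl fun α hα => ?_
    rw [Finset.mul_sum, Finset.mul_sum]
    refine Finset.sum_congr rfl fun β hβ => ?_
    set J := α.support ∪ β.support with hJ
    have hJt : J.card ≤ t := by
      refine le_trans (Finset.card_union_le _ _) (le_trans ?_ h2d)
      have := hsupp α hα
      have := hsupp β hβ
      omega
    have hcount := design_count htk hkv hdes J hJt
    have hsuper : (𝒦.filter fun K => J ⊆ K).card
        = (v - J.card).choose (k - J.card) := by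
      rw [h𝒦]
      rw [card_supersets Finset.univ J (Finset.subset_univ J) k (le_trans hJt htk)]
      rw [Finset.card_univ, Fintype.card_fin]
    rw [hsuper]
    have hcast : ((ℬ.filter fun B => J ⊆ B).card : ℂ) * (v.choose k : ℂ)
        = (ℬ.card : ℂ) * ((v - J.card).choose (k - J.card) : ℂ) := by
      exact_mod_cast congrArg (Nat.cast : ℕ → ℂ) hcount
    calc (v.choose k : ℂ) * ((MvPolynomial.coeff α f * (starRingEnd ℂ) (MvPolynomial.coeff β f))
          * ((ℬ.filter fun B => J ⊆ B).card : ℂ))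
        = (MvPolynomial.coeff α f * (starRingEnd ℂ) (MvPolynomial.coeff β f))
          * (((ℬ.filter fun B => J ⊆ B).card : ℂ) * (v.choose k : ℂ)) := by ring
      _ = (MvPolynomial.coeff α f * (starRingEnd ℂ) (MvPolynomial.coeff β f))
          * ((ℬ.card : ℂ) * ((v - J.card).choose (k - J.card) : ℂ)) := by rw [hcast]
      _ = _ := by ring
  have hLHS : ∑ B ∈ ℬ, (MvPolynomial.eval (charVec B) f)
      * (starRingEnd ℂ) (MvPolynomial.eval (charVec B) f) = 0 :=
    Finset.sum_eq_zero fun B hB => by rw [hvanish B hB, zero_mul]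
  rw [hLHS, mul_zero] at hkey
  have hKsum : ∑ K ∈ 𝒦, (MvPolynomial.eval (charVec K) f)
      * (starRingEnd ℂ) (MvPolynomial.eval (charVec K) f)
      = ((∑ K ∈ 𝒦, Complex.normSq (MvPolynomial.eval (charVec K) f) : ℝ) : ℂ) := by
    push_cast
    exact Finset.sum_congr rfl fun K _ => Complex.mul_conj _
  rw [hKsum] at hkey
  have hb : (ℬ.card : ℂ) ≠ 0 := Nat.cast_ne_zero.mpr hne.card_pos.ne'
  have hzero : (∑ K ∈ 𝒦, Complex.normSq (MvPolynomial.eval (charVec K) f)) = 0 := by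
    have h0 := (mul_eq_zero.mp hkey.symm).resolve_left hb
    exact_mod_cast h0
  have hpos : 0 < ∑ K ∈ 𝒦, Complex.normSq (MvPolynomial.eval (charVec K) f) := by
    have hSmem : S ∈ 𝒦 := Finset.mem_powersetCard.mpr ⟨Finset.subset_univ S, hS⟩
    exact Finset.sum_pos' (fun K _ => Complex.normSq_nonneg _)
      ⟨S, hSmem, Complex.normSq_pos.mpr hevalS⟩
  linarith
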